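/- Let m ≥ 0 and n ≥ 0. The poset Ca_𝐦(n) of 𝐦-canyons of size n is a lattice: the componentwise minimum of two 𝐦-canyons is again an 𝐦-canyon and is their meet in Ca_𝐦(n), and the least upper bound of u, v ∈ Ca_𝐦(n) is ↑_{Ca_𝐦}(u ∨ v), where u ∨ v is the componentwise maximum and ↑_{Ca_𝐦} is the Ca_𝐦-incrementation map. -/

import Mathlib

/-- Componentwise order on words of natural numbers of the same length. -/
def wle (u v : List ℕ) : Prop := List.Forall₂ (· ≤ ·) u v

/-- Strict componentwise order. -/
def wlt (u v : List ℕ) : Prop := wle u v ∧ u ≠ v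

/-- `u` is a `δ`-cliff: the letter at (0-indexed) position `i` is at most `δ i`.
(The range map is 0-indexed: `δ i` is the bound of the `(i+1)`-st letter.) -/
def IsCliff (δ : ℕ → ℕ) (u : List ℕ) : Prop := ∀ i < u.length, u.getD i 0 ≤ δ i

def ClosedByPrefix (S : Set (List ℕ)) : Prop := ∀ u v : List ℕ, u ++ v ∈ S → u ∈ S

def MinExtendable (S : Set (List ℕ)) : Prop := [] ∈ S ∧ ∀ u ∈ S, u ++ [0] ∈ S

def MaxExtendable (δ : ℕ → ℕ) (S : Set (List ℕ)) : Prop :=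
  [] ∈ S ∧ ∀ u ∈ S, u ++ [δ u.length] ∈ S

/-- `v` covers `u` in the subposet `S` (componentwise order on words of equal length). -/
def CoversIn (S : Set (List ℕ)) (u v : List ℕ) : Prop :=
  u ∈ S ∧ v ∈ S ∧ wlt u v ∧ ¬ ∃ w ∈ S, wlt u w ∧ wlt w v

/-- Auxiliary for the decrementation map: input is the reversed word. -/
noncomputable def decrAux (S : Set (List ℕ)) : List ℕ → List ℕ
  | [] => []
  | a :: r => decrAux S r ++ [sSup {b | b ≤ a ∧ decrAux S r ++ [b] ∈ S}]

/-- The `S`-decrementation map. -/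
noncomputable def decr (S : Set (List ℕ)) (u : List ℕ) : List ℕ := decrAux S u.reverse

/-- Auxiliary for the incrementation map: input is the reversed word. -/
noncomputable def incrAux (δ : ℕ → ℕ) (S : Set (List ℕ)) : List ℕ → List ℕ
  | [] => []
  | a :: r => incrAux δ S r ++
      [sInf {b | a ≤ b ∧ b ≤ δ r.length ∧ incrAux δ S r ++ [b] ∈ S}]

/-- The `S`-incrementation map. -/
noncomputable def incr (δ : ℕ → ℕ) (S : Set (List ℕ)) (u : List ℕ) : List ℕ :=
  incrAux δ S u.reverse

/-- The `S`-elevation map. -/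
noncomputable def elev (S : Set (List ℕ)) (u : List ℕ) : List ℕ :=
  (List.range u.length).map fun i =>
    Set.ncard {a : ℕ | a < u.getD i 0 ∧ u.take i ++ [a] ∈ S}

/-- A `δ`-hill: a weakly increasing `δ`-cliff. -/
def IsHill (δ : ℕ → ℕ) (u : List ℕ) : Prop :=
  IsCliff δ u ∧ List.Pairwise (· ≤ ·) u

/-- A `δ`-avalanche: a `δ`-cliff whose nonempty prefixes have small sums. -/
def IsAval (δ : ℕ → ℕ) (u : List ℕ) : Prop :=
  IsCliff δ u ∧ ∀ k < u.length, (u.take (k + 1)).sum ≤ δ k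

/-- A `δ`-canyon. -/
def IsCanyon (δ : ℕ → ℕ) (u : List ℕ) : Prop :=
  IsCliff δ u ∧ ∀ i < u.length, ∀ j, 1 ≤ j → j ≤ u.getD i 0 → j ≤ i →
    u.getD (i - j) 0 + j ≤ u.getD i 0

/-- The `δ`-reduction map. -/
def reduce (δ : ℕ → ℕ) (u : List ℕ) : List ℕ :=
  (List.range u.length).map fun i => min (u.getD i 0) (δ i)

/-- `δ` is valley-free. -/
def ValleyFree (δ : ℕ → ℕ) : Prop :=
  ¬ ∃ i₁ i₂ i₃ : ℕ, i₁ < i₂ ∧ i₂ < i₃ ∧ δ i₂ < δ i₁ ∧ δ i₂ < δ i₃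


section Stmt12Aux

private lemma getD_append_lt' (l : List ℕ) (a : ℕ) {i : ℕ} (h : i < l.length) :
    (l ++ [a]).getD i 0 = l.getD i 0 := by
  rw [List.getD_eq_getElem?_getD, List.getD_eq_getElem?_getD, List.getElem?_append, if_pos h]

private lemma getD_append_len' (l : List ℕ) (a : ℕ) {k : ℕ} (h : k = l.length) :
    (l ++ [a]).getD k 0 = a := by
  subst h; simp [List.getD]

private lemma getD_take' (l : List ℕ) {k i : ℕ} (h : i < k) :
    (l.take k).getD i 0 = l.getD i 0 := by
  rw [List.getD_eq_getElem?_getD, List.getD_eq_getElem?_getD, List.getElem?_take, if_pos h]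

private lemma wle_iff {u v : List ℕ} :
    wle u v ↔ u.length = v.length ∧ ∀ i < u.length, u.getD i 0 ≤ v.getD i 0 := by
  rw [wle, List.forall₂_iff_get]
  constructor
  · rintro ⟨h, h2⟩
    refine ⟨h, fun i hi => ?_⟩
    rw [List.getD_eq_getElem _ _ hi, List.getD_eq_getElem _ _ (h ▸ hi)]
    exact h2 i hi (h ▸ hi)
  · rintro ⟨h, h2⟩
    refine ⟨h, fun i hi hi2 => ?_⟩
    have := h2 i hi
    rwa [List.getD_eq_getElem _ _ hi, List.getD_eq_getElem _ _ hi2] at this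

private lemma canyon_take (δ : ℕ → ℕ) {w : List ℕ} (k : ℕ) (hw : IsCanyon δ w) :
    IsCanyon δ (w.take k) := by
  have hlen : (w.take k).length = min k w.length := List.length_take
  constructor
  · intro i hi
    rw [hlen] at hi
    rw [getD_take' _ (lt_of_lt_of_le hi (min_le_left _ _))]
    exact hw.1 i (lt_of_lt_of_le hi (min_le_right _ _))
  · intro i hi j hj1 hj2 hj3
    rw [hlen] at hi
    have hik : i < k := lt_of_lt_of_le hi (min_le_left _ _)
    have hiw : i < w.length := lt_of_lt_of_le hi (min_le_right _ _)
    rw [getD_take' _ hik] at hj2 ⊢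
    rw [getD_take' _ (lt_of_le_of_lt (Nat.sub_le i j) hik)]
    exact hw.2 i hiw j hj1 hj2 hj3

private lemma canyon_append (δ : ℕ → ℕ) {p : List ℕ} {d : ℕ} (hp : IsCanyon δ p)
    (hd : d ≤ δ p.length)
    (hlast : ∀ j, 1 ≤ j → j ≤ d → j ≤ p.length → p.getD (p.length - j) 0 + j ≤ d) :
    IsCanyon δ (p ++ [d]) := by
  have hlen : (p ++ [d]).length = p.length + 1 := by simp
  constructor
  · intro i hi
    rw [hlen] at hi
    rcases Nat.lt_or_ge i p.length with h | h
    · rw [getD_append_lt' _ _ h]; exact hp.1 i h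
    · have hip : i = p.length := by omega
      rw [getD_append_len' _ _ hip, hip]
      exact hd
  · intro i hi j hj1 hj2 hj3
    rw [hlen] at hi
    rcases Nat.lt_or_ge i p.length with h | h
    · rw [getD_append_lt' _ _ h] at hj2 ⊢
      rw [getD_append_lt' _ _ (by omega : i - j < p.length)]
      exact hp.2 i h j hj1 hj2 hj3
    · have hip : i = p.length := by omega
      rw [getD_append_len' _ _ hip] at hj2 ⊢
      rw [getD_append_lt' _ _ (by omega : i - j < p.length), hip]
      exact hlast j hj1 hj2 (by omega)

private lemma incr_main (m : ℕ) (r : List ℕ)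
    (hc : IsCliff (fun i => m * i) r.reverse) :
    IsCanyon (fun i => m * i)
        (incrAux (fun i => m * i) {w | IsCanyon (fun i => m * i) w} r) ∧
    (incrAux (fun i => m * i) {w | IsCanyon (fun i => m * i) w} r).length = r.length ∧
    wle r.reverse (incrAux (fun i => m * i) {w | IsCanyon (fun i => m * i) w} r) ∧
    ∀ w, IsCanyon (fun i => m * i) w → wle r.reverse w →
      wle (incrAux (fun i => m * i) {w | IsCanyon (fun i => m * i) w} r) w := by
  induction r with
  | nil =>
    refine ⟨⟨fun i hi => by simp [incrAux] at hi, fun i hi => by simp [incrAux] at hi⟩,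
      by simp [incrAux], by simp [incrAux, wle], ?_⟩
    intro w _ hw
    simpa [incrAux] using hw
  | cons a r' ih =>
    have hrev : (a :: r').reverse = r'.reverse ++ [a] := by simp
    have hc' : IsCliff (fun i => m * i) r'.reverse := by
      intro i hi
      have := hc i (by simp at hi ⊢; omega)
      rwa [hrev, getD_append_lt' _ _ hi] at this
    obtain ⟨hp, hplen, hple, hpmin⟩ := ih hc'
    set ℓ := r'.length with hℓ
    set p := incrAux (fun i => m * i) {w | IsCanyon (fun i => m * i) w} r' with hpdef
    have hplen' : p.length = ℓ := hplen
    have ha : a ≤ m * ℓ := by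
      have h2 := hc ℓ (by simp [hℓ])
      rwa [hrev, getD_append_len' _ _ (by simp [hℓ])] at h2
    set T := {b | a ≤ b ∧ b ≤ (fun i => m * i) r'.length ∧
        p ++ [b] ∈ {w | IsCanyon (fun i => m * i) w}} with hT
    have hm_mem : m * ℓ ∈ T := by
      refine ⟨ha, le_refl _, ?_⟩
      apply canyon_append _ hp
      · rw [hplen']
      · intro j hj1 hj2 hj3
        rw [hplen'] at hj3 ⊢
        have h1 : p.getD (ℓ - j) 0 ≤ m * (ℓ - j) := hp.1 (ℓ - j) (by omega)
        have hm1 : 1 ≤ m := by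
          rcases Nat.eq_zero_or_pos m with h | h
          · subst h; simp at hj2; omega
          · exact h
        have h2 : m * (ℓ - j) + m * j = m * ℓ := by
          rw [← Nat.mul_add]; congr 1; omega
        nlinarith
    set c := sInf T with hcdef
    have hcm : c ∈ T := Nat.sInf_mem ⟨m * ℓ, hm_mem⟩
    have heq : incrAux (fun i => m * i) {w | IsCanyon (fun i => m * i) w} (a :: r')
        = p ++ [c] := by rw [incrAux]
    rw [heq, hrev]
    refine ⟨hcm.2.2, by simp [hplen', hℓ], ?_, ?_⟩
    · rw [wle_iff]
      obtain ⟨_, hplep⟩ := wle_iff.mp hple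
      refine ⟨by simp [hplen', hℓ], fun i hi => ?_⟩
      simp only [List.length_append, List.length_reverse, List.length_singleton] at hi
      rcases Nat.lt_or_ge i ℓ with h | h
      · rw [getD_append_lt' _ _ (by simpa using h),
          getD_append_lt' _ _ (by rw [hplen']; exact h)]
        exact hplep i (by simpa using h)
      · have hiℓ : i = ℓ := by omega
        rw [getD_append_len' _ _ (by simp [hiℓ, hℓ]), getD_append_len' _ _ (by rw [hplen', hiℓ])]
        exact hcm.1
    · intro w hw hlew
      obtain ⟨hwlen, hwp⟩ := wle_iff.mp hlew
      simp only [List.length_append, List.length_reverse, List.length_singleton] at hwlen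
      set w' := w.take ℓ with hw'def
      set d := w.getD ℓ 0 with hddef
      have hw' : IsCanyon (fun i => m * i) w' := canyon_take _ ℓ hw
      have hw'len : w'.length = ℓ := by
        rw [hw'def, List.length_take]; omega
      have hle' : wle r'.reverse w' := by
        rw [wle_iff]
        refine ⟨by simp [hw'len, hℓ], fun i hi => ?_⟩
        simp only [List.length_reverse] at hi
        have := hwp i (by simpa using Nat.lt_succ_of_lt hi)
        rw [getD_append_lt' _ _ (by simpa using hi)] at this
        rwa [hw'def, getD_take' _ hi]
      have hpw' : wle p w' := hpmin w' hw' hle'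
      obtain ⟨_, hpw'p⟩ := wle_iff.mp hpw'
      have had : a ≤ d := by
        have := hwp ℓ (by simp [hℓ])
        rwa [getD_append_len' _ _ (by simp [hℓ])] at this
      have hdm : d ≤ m * ℓ := hw.1 ℓ (by omega)
      have hd_mem : d ∈ T := by
        refine ⟨had, hdm, ?_⟩
        apply canyon_append _ hp
        · rw [hplen']; exact hdm
        · intro j hj1 hj2 hj3
          rw [hplen'] at hj3 ⊢
          have h1 : p.getD (ℓ - j) 0 ≤ w'.getD (ℓ - j) 0 :=
            hpw'p (ℓ - j) (by rw [hplen']; omega)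
          rw [hw'def, getD_take' _ (by omega : ℓ - j < ℓ)] at h1
          have h2 := hw.2 ℓ (by omega) j hj1 hj2 hj3
          omega
      have hcd : c ≤ d := Nat.sInf_le hd_mem
      rw [wle_iff]
      refine ⟨by simp [hplen']; omega, fun i hi => ?_⟩
      simp only [List.length_append, hplen', List.length_singleton] at hi
      rcases Nat.lt_or_ge i ℓ with h | h
      · rw [getD_append_lt' _ _ (by rw [hplen']; exact h)]
        have := hpw'p i (by rw [hplen']; exact h)
        rwa [hw'def, getD_take' _ h] at this
      · have hiℓ : i = ℓ := by omega
        rw [getD_append_len' _ _ (by rw [hplen', hiℓ]), hiℓ]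
        exact hcd

end Stmt12Aux

/-- `Ca_𝐦(n)` is a lattice: the componentwise minimum of two
`𝐦`-canyons is an `𝐦`-canyon and is their meet, and the least upper bound of
`u` and `v` is `↑_{Ca_𝐦}(u ∨ v)`, the incrementation of the componentwise maximum. -/
theorem stmt12 (m n : ℕ) (u v : List ℕ)
    (hu : IsCanyon (fun i => m * i) u) (hv : IsCanyon (fun i => m * i) v)
    (hun : u.length = n) (hvn : v.length = n) :
    (IsCanyon (fun i => m * i) (List.zipWith min u v) ∧
      wle (List.zipWith min u v) u ∧ wle (List.zipWith min u v) v ∧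
      ∀ w, IsCanyon (fun i => m * i) w → wle w u → wle w v →
        wle w (List.zipWith min u v)) ∧
    (IsCanyon (fun i => m * i)
        (incr (fun i => m * i) {w | IsCanyon (fun i => m * i) w} (List.zipWith max u v)) ∧
      wle u (incr (fun i => m * i) {w | IsCanyon (fun i => m * i) w} (List.zipWith max u v)) ∧
      wle v (incr (fun i => m * i) {w | IsCanyon (fun i => m * i) w} (List.zipWith max u v)) ∧
      ∀ w, IsCanyon (fun i => m * i) w → wle u w → wle v w →
        wle (incr (fun i => m * i) {w | IsCanyon (fun i => m * i) w} (List.zipWith max u v)) w) := by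
  have hminlen : (List.zipWith min u v).length = n := by simp [hun, hvn]
  have hmaxlen : (List.zipWith max u v).length = n := by simp [hun, hvn]
  have hgmin : ∀ i < n, (List.zipWith min u v).getD i 0 = min (u.getD i 0) (v.getD i 0) := by
    intro i hi
    rw [List.getD_eq_getElem _ _ (by omega : i < (List.zipWith min u v).length),
      List.getElem_zipWith, List.getD_eq_getElem _ _ (by omega), List.getD_eq_getElem _ _ (by omega)]
  have hgmax : ∀ i < n, (List.zipWith max u v).getD i 0 = max (u.getD i 0) (v.getD i 0) := by
    intro i hi
    rw [List.getD_eq_getElem _ _ (by omega : i < (List.zipWith max u v).length),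
      List.getElem_zipWith, List.getD_eq_getElem _ _ (by omega), List.getD_eq_getElem _ _ (by omega)]
  constructor
  · -- meet part
    have hmincan : IsCanyon (fun i => m * i) (List.zipWith min u v) := by
      constructor
      · intro i hi
        rw [hminlen] at hi
        rw [hgmin i hi]
        exact le_trans (min_le_left _ _) (hu.1 i (by omega))
      · intro i hi j hj1 hj2 hj3
        rw [hminlen] at hi
        rw [hgmin i hi] at hj2 ⊢
        rw [hgmin (i - j) (by omega)]
        rcases min_cases (u.getD i 0) (v.getD i 0) with ⟨he, hle⟩ | ⟨he, hle⟩
        · rw [he] at hj2 ⊢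
          have := hu.2 i (by omega) j hj1 hj2 hj3
          have h2 : min (u.getD (i-j) 0) (v.getD (i-j) 0) ≤ u.getD (i-j) 0 := min_le_left _ _
          omega
        · rw [he] at hj2 ⊢
          have := hv.2 i (by omega) j hj1 hj2 hj3
          have h2 : min (u.getD (i-j) 0) (v.getD (i-j) 0) ≤ v.getD (i-j) 0 := min_le_right _ _
          omega
    refine ⟨hmincan, ?_, ?_, ?_⟩
    · rw [wle_iff]
      exact ⟨by omega, fun i hi => by rw [hgmin i (by omega)]; exact min_le_left _ _⟩
    · rw [wle_iff]
      exact ⟨by omega, fun i hi => by rw [hgmin i (by omega)]; exact min_le_right _ _⟩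
    · intro w _ hwu hwv
      obtain ⟨hl1, hp1⟩ := wle_iff.mp hwu
      obtain ⟨_, hp2⟩ := wle_iff.mp hwv
      rw [wle_iff]
      refine ⟨by omega, fun i hi => ?_⟩
      rw [hgmin i (by omega)]
      exact le_min (hp1 i hi) (hp2 i hi)
  · -- join part
    have hmaxcliff : IsCliff (fun i => m * i) (List.zipWith max u v) := by
      intro i hi
      rw [hmaxlen] at hi
      rw [hgmax i hi]
      exact max_le (hu.1 i (by omega)) (hv.1 i (by omega))
    have hmaxcliff' : IsCliff (fun i => m * i) (List.zipWith max u v).reverse.reverse := by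
      rwa [List.reverse_reverse]
    obtain ⟨h1, h2, h3, h4⟩ := incr_main m (List.zipWith max u v).reverse hmaxcliff'
    rw [List.reverse_reverse] at h3 h4
    have hincr : incr (fun i => m * i) {w | IsCanyon (fun i => m * i) w} (List.zipWith max u v)
        = incrAux (fun i => m * i) {w | IsCanyon (fun i => m * i) w}
            (List.zipWith max u v).reverse := rfl
    rw [hincr]
    obtain ⟨h3l, h3p⟩ := wle_iff.mp h3
    have hilen : (incrAux (fun i => m * i) {w | IsCanyon (fun i => m * i) w}
        (List.zipWith max u v).reverse).length = n := by
      rw [h2]; simp [hun, hvn]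
    refine ⟨h1, ?_, ?_, ?_⟩
    · rw [wle_iff]
      refine ⟨by omega, fun i hi => ?_⟩
      rw [hun] at hi
      refine le_trans ?_ (h3p i (by omega))
      rw [hgmax i hi]
      exact le_max_left _ _
    · rw [wle_iff]
      refine ⟨by omega, fun i hi => ?_⟩
      rw [hvn] at hi
      refine le_trans ?_ (h3p i (by omega))
      rw [hgmax i hi]
      exact le_max_right _ _
    · intro w hw hwu hwv
      apply h4 w hw
      obtain ⟨hl1, hp1⟩ := wle_iff.mp hwu
      obtain ⟨_, hp2⟩ := wle_iff.mp hwv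
      rw [wle_iff]
      refine ⟨by omega, fun i hi => ?_⟩
      rw [hmaxlen] at hi
      rw [hgmax i hi]
      exact max_le (hp1 i (by omega)) (hp2 i (by omega))
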